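/- Let G be a free group with basis g₁, …, g_n, let H be a free group, let φ, ψ : G → H be homomorphisms, and let u, v ∈ H be distinct. Let φ^v : G → H be given by φ^v(g) = v⁻¹ φ(g) v. Suppose φ^v ∗ ψ : G ∗ G → H has remnant, and suppose that for each generator g of G ∗ G, the remnant word Rem_{φ^v ∗ ψ}(g) does not fully cancel in the reduced form of either of the products ((φ^v ∗ ψ)(g)) · v⁻¹u and u⁻¹v · ((φ^v ∗ ψ)(g)). Then u and v are in different doubly-twisted conjugacy classes: there is no g ∈ G with v = φ(g) u ψ(g)⁻¹. -/

import Mathlib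

/-! Basic definitions: cancellation in products of reduced words, remnant
of a homomorphism of free groups, and assorted constructions. -/

open FreeGroup

/-- `bpow w e` is `w` if `e = true` (exponent `+1`) and `w⁻¹` if `e = false`
(exponent `-1`). -/
def bpow {β : Type*} (w : FreeGroup β) (e : Bool) : FreeGroup β := if e then w else w⁻¹

/-- The number of letters cancelled between `a` and `b` when the product `a * b`
is brought to reduced form: `(|a| + |b| - |a * b|) / 2`. -/
def cancel {β : Type*} [DecidableEq β] (a b : FreeGroup β) : ℕ :=
  (FreeGroup.norm a + FreeGroup.norm b - FreeGroup.norm (a * b)) / 2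

/-- The maximal number of letters of the reduced word `η(gᵢ)` cancelled on its left
in a product `η(gⱼ)^ε * η(gᵢ)`, over all `j` and `ε = ±1` except `j = i, ε = -1`. -/
def maxLeftCancel {α β : Type*} [Fintype α] [DecidableEq α] [DecidableEq β]
    (η : FreeGroup α →* FreeGroup β) (i : α) : ℕ :=
  (Finset.univ.filter fun je : α × Bool => je ≠ (i, false)).sup
    fun je => cancel (bpow (η (FreeGroup.of je.1)) je.2) (η (FreeGroup.of i))

/-- The maximal number of letters of the reduced word `η(gᵢ)` cancelled on its right
in a product `η(gᵢ) * η(gⱼ)^ε`, over all `j` and `ε = ±1` except `j = i, ε = -1`. -/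
def maxRightCancel {α β : Type*} [Fintype α] [DecidableEq α] [DecidableEq β]
    (η : FreeGroup α →* FreeGroup β) (i : α) : ℕ :=
  (Finset.univ.filter fun je : α × Bool => je ≠ (i, false)).sup
    fun je => cancel (η (FreeGroup.of i)) (bpow (η (FreeGroup.of je.1)) je.2)

/-- `η` has remnant: for each generator `gᵢ`, the maximal left cancellation plus the
maximal right cancellation is strictly less than the length of `η(gᵢ)`, so a nonempty
middle subword (the remnant `Rem_η(gᵢ)`) always survives. -/
def HasRemnant {α β : Type*} [Fintype α] [DecidableEq α] [DecidableEq β]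
    (η : FreeGroup α →* FreeGroup β) : Prop :=
  ∀ i : α, maxLeftCancel η i + maxRightCancel η i < FreeGroup.norm (η (FreeGroup.of i))

/-- The length `|Rem_η(gᵢ)|` of the remnant word of `gᵢ`: the part of `η(gᵢ)` surviving
all maximal cancellations. -/
def remnantLength {α β : Type*} [Fintype α] [DecidableEq α] [DecidableEq β]
    (η : FreeGroup α →* FreeGroup β) (i : α) : ℕ :=
  FreeGroup.norm (η (FreeGroup.of i)) - maxLeftCancel η i - maxRightCancel η i

/-- The remnant `Rem_η(gᵢ)` occupies positions `[maxLeftCancel η i, |η(gᵢ)| - maxRightCancel η i)`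
of the reduced word `η(gᵢ)`.  It does not fully cancel in the reduced form of the product
`η(gᵢ) * w` iff the number of letters cancelled from the right end of `η(gᵢ)`, namely
`cancel (η(gᵢ)) w`, leaves some remnant letter alive. -/
def remnantSurvivesRightMul {α β : Type*} [Fintype α] [DecidableEq α] [DecidableEq β]
    (η : FreeGroup α →* FreeGroup β) (i : α) (w : FreeGroup β) : Prop :=
  cancel (η (FreeGroup.of i)) w + maxLeftCancel η i < FreeGroup.norm (η (FreeGroup.of i))

/-- The remnant `Rem_η(gᵢ)` does not fully cancel in the reduced form of the
product `w * η(gᵢ)`. -/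
def remnantSurvivesLeftMul {α β : Type*} [Fintype α] [DecidableEq α] [DecidableEq β]
    (η : FreeGroup α →* FreeGroup β) (i : α) (w : FreeGroup β) : Prop :=
  cancel w (η (FreeGroup.of i)) + maxRightCancel η i < FreeGroup.norm (η (FreeGroup.of i))

/-- The homomorphism `φ ∗ ψ : G ∗ G → H` on the free product `G ∗ G`, realized as the
free group on `α ⊕ α`, sending the generators of the first factor via `φ` and those of
the second factor via `ψ`. -/
def prodHom {α β : Type*} (φ ψ : FreeGroup α →* FreeGroup β) :
    FreeGroup (α ⊕ α) →* FreeGroup β :=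
  FreeGroup.lift (Sum.elim (fun i => φ (FreeGroup.of i)) (fun i => ψ (FreeGroup.of i)))

/-- `φ^v : g ↦ v⁻¹ φ(g) v`. -/
def conjHom {G H : Type*} [Group G] [Group H] (φ : G →* H) (v : H) : G →* H :=
  ((MulAut.conj v⁻¹).toMonoidHom).comp φ

/-- The equalizer subgroup `Eq(φ, ψ) = {g : φ g = ψ g}`. -/
def eqSubgroup {G H : Type*} [Group G] [Group H] (φ ψ : G →* H) : Subgroup G where
  carrier := {g | φ g = ψ g}
  one_mem' := by simp
  mul_mem' := by
    intro a b ha hb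
    simp only [Set.mem_setOf_eq] at *
    rw [_root_.map_mul, _root_.map_mul, ha, hb]
  inv_mem' := by
    intro a ha
    simp only [Set.mem_setOf_eq] at *
    rw [_root_.map_inv, _root_.map_inv, ha]

/-!
Suppose `v = φ(g) u ψ(g)⁻¹`. If `g = 1` then `u = v`. Otherwise, writing `ḡ` and `g'` for the
copies of `g` in the two free factors of `G ∗ G`, the word `w = ḡ⁻¹ g'` is nontrivial and
`(φᵛ ∗ ψ)(w) = v⁻¹ u`. Since `φᵛ ∗ ψ` has remnant, the image of the first letter of the reduced
word `w` keeps its remnant against the images of the later letters; by hypothesis it also keeps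
it against `u⁻¹ v` on its left. So `u⁻¹ v · (φᵛ ∗ ψ)(w)` is not `1`, a contradiction.
-/

namespace FreeGroup

variable {β : Type*}

theorem IsReduced.exists_append_invRev_append {L₁ L₂ : List (β × Bool)}
    (h₁ : IsReduced L₁) (h₂ : IsReduced L₂) :
    ∃ P S Q, L₁ = P ++ S ∧ L₂ = invRev S ++ Q ∧ IsReduced (P ++ Q) := by
  induction L₁ using List.reverseRecOn generalizing L₂ with
  | nil => exact ⟨[], [], L₂, rfl, rfl, h₂⟩
  | append_singleton L a ih =>
    by_cases hcancel : ∃ Q, L₂ = (a.1, !a.2) :: Q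
    · obtain ⟨Q, rfl⟩ := hcancel
      obtain ⟨P, S, Q', rfl, rfl, hPQ⟩ :=
        ih (h₁.infix (List.prefix_append L [a]).isInfix) (h₂.infix (List.suffix_cons _ Q).isInfix)
      exact ⟨P, S ++ [a], Q', by simp, by simp [invRev], hPQ⟩
    · refine ⟨L ++ [a], [], L₂, by simp, by simp [invRev], List.IsChain.append h₁ h₂ ?_⟩
      rintro x hx y hy
      obtain ⟨Q, rfl⟩ : ∃ Q, L₂ = y :: Q := by
        cases L₂ with
        | nil => simp at hy
        | cons c Q => simp_all
      simp only [List.getLast?_append, List.getLast?_singleton, Option.some_or,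
        Option.mem_some_iff] at hx
      subst hx
      intro h1
      by_contra h2
      exact hcancel ⟨Q, by rw [List.cons.injEq, Prod.ext_iff]; grind⟩

end FreeGroup

section Cancellation

variable {β : Type*} [DecidableEq β] {x y : FreeGroup β} {P S Q : List (β × Bool)}

theorem toWord_mul_eq_append (hx : x.toWord = P ++ S) (hy : y.toWord = invRev S ++ Q)
    (hPQ : IsReduced (P ++ Q)) : (x * y).toWord = P ++ Q := by
  have hxy : x * y = mk (P ++ Q) := by
    rw [← mk_toWord (x := x), ← mk_toWord (x := y), hx, hy, ← mul_mk, ← mul_mk, ← mul_mk,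
      ← inv_mk]
    group
  rw [hxy, toWord_mk, hPQ.reduce_eq]

theorem cancel_eq_length (hx : x.toWord = P ++ S) (hy : y.toWord = invRev S ++ Q)
    (hPQ : IsReduced (P ++ Q)) : cancel x y = S.length := by
  have hxy := toWord_mul_eq_append hx hy hPQ
  simp only [cancel, FreeGroup.norm, hx, hy, hxy, List.length_append, invRev_length]
  omega

theorem exists_toWord_eq_append_invRev_append (x y : FreeGroup β) :
    ∃ P S Q, x.toWord = P ++ S ∧ y.toWord = invRev S ++ Q ∧ IsReduced (P ++ Q) :=
  isReduced_toWord.exists_append_invRev_append isReduced_toWord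

theorem norm_mul_add_two_mul_cancel (x y : FreeGroup β) :
    FreeGroup.norm (x * y) + 2 * cancel x y = FreeGroup.norm x + FreeGroup.norm y := by
  obtain ⟨P, S, Q, hx, hy, hPQ⟩ := exists_toWord_eq_append_invRev_append x y
  simp only [cancel_eq_length hx hy hPQ, FreeGroup.norm, toWord_mul_eq_append hx hy hPQ, hx, hy,
    List.length_append, invRev_length]
  omega

theorem cancel_le_norm_left (x y : FreeGroup β) : cancel x y ≤ FreeGroup.norm x := by
  obtain ⟨P, S, Q, hx, hy, hPQ⟩ := exists_toWord_eq_append_invRev_append x y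
  simp [cancel_eq_length hx hy hPQ, FreeGroup.norm, hx]

theorem cancel_le_norm_right (x y : FreeGroup β) : cancel x y ≤ FreeGroup.norm y := by
  obtain ⟨P, S, Q, hx, hy, hPQ⟩ := exists_toWord_eq_append_invRev_append x y
  simp [cancel_eq_length hx hy hPQ, FreeGroup.norm, hy, invRev_length]

theorem cancel_inv_inv (x y : FreeGroup β) : cancel y⁻¹ x⁻¹ = cancel x y := by
  rw [cancel, cancel, ← mul_inv_rev, norm_inv_eq, norm_inv_eq, norm_inv_eq,
    add_comm (FreeGroup.norm y)]

theorem cancel_one_right (x : FreeGroup β) : cancel x 1 = 0 := by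
  simp [cancel, FreeGroup.norm_one]

theorem cancel_mul_eq_cancel_of_add_lt (a b c : FreeGroup β)
    (h : cancel a b + cancel b c < FreeGroup.norm b) : cancel a (b * c) = cancel a b := by
  obtain ⟨P₁, S₁, Q₁, ha, hb, hab⟩ := exists_toWord_eq_append_invRev_append a b
  obtain ⟨P₂, S₂, Q₂, hb', hc, hbc⟩ := exists_toWord_eq_append_invRev_append b c
  have hlen : S₁.length + S₂.length < S₁.length + Q₁.length := by
    simpa [cancel_eq_length ha hb hab, cancel_eq_length hb' hc hbc, FreeGroup.norm, hb,
      invRev_length] using h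
  -- `b = S₁⁻¹ ++ M ++ S₂` with a nonempty middle part `M` untouched by both cancellations
  obtain ⟨M, hP₂, hQ₁⟩ : ∃ M, P₂ = invRev S₁ ++ M ∧ Q₁ = M ++ S₂ := by
    rcases List.append_eq_append_iff.1 (hb.symm.trans hb') with ⟨M, hM⟩ | ⟨M, -, hS₂⟩
    · exact ⟨M, hM⟩
    · simp only [hS₂, List.length_append] at hlen
      omega
  have hM : M ≠ [] := by
    rintro rfl
    simp [hQ₁] at hlen
  have hPMQ : IsReduced (P₁ ++ (M ++ Q₂)) := by
    rw [← List.append_assoc]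
    refine IsReduced.append_overlap ?_ ?_ hM
    · exact hab.infix ⟨[], S₂, by simp [hQ₁]⟩
    · exact hbc.infix ⟨invRev S₁, [], by simp [hP₂]⟩
  rw [cancel_eq_length ha (by rw [toWord_mul_eq_append hb' hc hbc, hP₂, List.append_assoc]) hPMQ,
    cancel_eq_length ha hb hab]

theorem mul_mul_ne_one_of_cancel_add_cancel_lt (a b c : FreeGroup β)
    (h : cancel a b + cancel b c < FreeGroup.norm b) : a * (b * c) ≠ 1 := by
  intro habc
  have habc_norm := norm_mul_add_two_mul_cancel a (b * c)
  rw [habc, FreeGroup.norm_one, cancel_mul_eq_cancel_of_add_lt a b c h] at habc_norm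
  have hbc_norm := norm_mul_add_two_mul_cancel b c
  have := cancel_le_norm_left a b
  have := cancel_le_norm_right b c
  omega

end Cancellation

section Remnant

variable {α β : Type*} (η : FreeGroup α →* FreeGroup β)

def letterImage (p : α × Bool) : FreeGroup β := bpow (η (of p.1)) p.2

theorem letterImage_inv (p : α × Bool) : (letterImage η p)⁻¹ = letterImage η (p.1, !p.2) := by
  obtain ⟨i, _ | _⟩ := p <;> simp [letterImage, bpow]

theorem map_mk_cons (p : α × Bool) (L : List (α × Bool)) :
    η (mk (p :: L)) = letterImage η p * η (mk L) := by
  rw [← List.singleton_append, ← mul_mk, _root_.map_mul]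
  obtain ⟨i, _ | _⟩ := p
  · rw [show mk [(i, false)] = (of i)⁻¹ from (inv_mk (L := [(i, true)])).symm]
    simp [letterImage, bpow]
  · rfl

variable [DecidableEq β]

theorem norm_letterImage (p : α × Bool) :
    FreeGroup.norm (letterImage η p) = FreeGroup.norm (η (of p.1)) := by
  obtain ⟨i, _ | _⟩ := p <;> simp [letterImage, bpow, norm_inv_eq]

variable [Fintype α] [DecidableEq α]

/-- For `ε = -1` the right end of `η(gᵢ)⁻¹` is the inverted left end of `η(gᵢ)`. -/
def rightCancelBound (p : α × Bool) : ℕ :=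
  if p.2 then maxRightCancel η p.1 else maxLeftCancel η p.1

def leftCancelBound (p : α × Bool) : ℕ := rightCancelBound η (p.1, !p.2)

theorem cancel_le_maxRightCancel (i : α) {je : α × Bool} (h : je ≠ (i, false)) :
    cancel (η (of i)) (bpow (η (of je.1)) je.2) ≤ maxRightCancel η i :=
  Finset.le_sup (f := fun je : α × Bool => cancel (η (of i)) (bpow (η (of je.1)) je.2))
    (Finset.mem_filter.2 ⟨Finset.mem_univ je, h⟩)

theorem cancel_le_maxLeftCancel (i : α) {je : α × Bool} (h : je ≠ (i, false)) :
    cancel (bpow (η (of je.1)) je.2) (η (of i)) ≤ maxLeftCancel η i :=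
  Finset.le_sup (f := fun je : α × Bool => cancel (bpow (η (of je.1)) je.2) (η (of i)))
    (Finset.mem_filter.2 ⟨Finset.mem_univ je, h⟩)

variable {η}

theorem cancel_letterImage_le_rightCancelBound {p q : α × Bool} (hpq : p.1 = q.1 → p.2 = q.2) :
    cancel (letterImage η p) (letterImage η q) ≤ rightCancelBound η p := by
  obtain ⟨i, _ | _⟩ := p <;> obtain ⟨j, f⟩ := q
  · rw [← cancel_inv_inv, letterImage_inv, letterImage_inv]
    exact cancel_le_maxLeftCancel η i (je := (j, !f)) (by grind)
  · exact cancel_le_maxRightCancel η i (je := (j, f)) (by grind)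

theorem cancel_letterImage_le_leftCancelBound {p q : α × Bool} (hpq : p.1 = q.1 → p.2 = q.2) :
    cancel (letterImage η p) (letterImage η q) ≤ leftCancelBound η q := by
  rw [← cancel_inv_inv, letterImage_inv, letterImage_inv]
  exact cancel_letterImage_le_rightCancelBound (by grind)

theorem leftCancelBound_add_rightCancelBound_lt (hrem : HasRemnant η) (p : α × Bool) :
    leftCancelBound η p + rightCancelBound η p < FreeGroup.norm (letterImage η p) := by
  obtain ⟨i, e⟩ := p
  have := hrem i
  cases e <;> simp [leftCancelBound, rightCancelBound, norm_letterImage] <;> omega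

/-- Each following letter keeps its remnant, so cancellation never propagates past it. -/
theorem cancel_letterImage_map_mk_le (hrem : HasRemnant η) {p : α × Bool} {L : List (α × Bool)}
    (hL : IsReduced (p :: L)) : cancel (letterImage η p) (η (mk L)) ≤ rightCancelBound η p := by
  induction L generalizing p with
  | nil => simp [← one_eq_mk, cancel_one_right]
  | cons q L ih =>
    obtain ⟨hpq, hqL⟩ := isReduced_cons_cons.1 hL
    rw [map_mk_cons, cancel_mul_eq_cancel_of_add_lt]
    · exact cancel_letterImage_le_rightCancelBound hpq
    · calc cancel (letterImage η p) (letterImage η q) + cancel (letterImage η q) (η (mk L))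
          ≤ leftCancelBound η q + rightCancelBound η q :=
            add_le_add (cancel_letterImage_le_leftCancelBound hpq) (ih hqL)
        _ < FreeGroup.norm (letterImage η q) := leftCancelBound_add_rightCancelBound_lt hrem q

theorem cancel_add_rightCancelBound_lt {z : FreeGroup β} {p : α × Bool}
    (hR : remnantSurvivesRightMul η p.1 z⁻¹) (hL : remnantSurvivesLeftMul η p.1 z) :
    cancel z (letterImage η p) + rightCancelBound η p < FreeGroup.norm (letterImage η p) := by
  obtain ⟨i, _ | _⟩ := p
  · rw [← cancel_inv_inv, letterImage_inv, norm_letterImage]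
    simpa [remnantSurvivesRightMul, rightCancelBound, letterImage, bpow] using hR
  · simpa [remnantSurvivesLeftMul, rightCancelBound, letterImage, bpow] using hL

theorem mul_map_ne_one_of_remnantSurvives (hrem : HasRemnant η) {z : FreeGroup β}
    (hR : ∀ i, remnantSurvivesRightMul η i z⁻¹) (hL : ∀ i, remnantSurvivesLeftMul η i z)
    {w : FreeGroup α} (hw : w ≠ 1) : z * η w ≠ 1 := by
  obtain ⟨p, L, hpL⟩ := List.exists_cons_of_ne_nil (toWord_eq_nil_iff.not.2 hw)
  have hred : IsReduced (p :: L) := hpL ▸ isReduced_toWord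
  rw [← mk_toWord (x := w), hpL, map_mk_cons]
  refine mul_mul_ne_one_of_cancel_add_cancel_lt _ _ _ ?_
  calc cancel z (letterImage η p) + cancel (letterImage η p) (η (mk L))
      ≤ cancel z (letterImage η p) + rightCancelBound η p :=
        Nat.add_le_add_left (cancel_letterImage_map_mk_le hrem hred) _
    _ < FreeGroup.norm (letterImage η p) := cancel_add_rightCancelBound_lt (hR p.1) (hL p.1)

end Remnant

section FreeProduct

variable {α β : Type*}

theorem prodHom_map_inl (φ ψ : FreeGroup α →* FreeGroup β) (g : FreeGroup α) :
    prodHom φ ψ (map Sum.inl g) = φ g := by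
  induction g using FreeGroup.induction_on <;> simp_all [prodHom]

theorem prodHom_map_inr (φ ψ : FreeGroup α →* FreeGroup β) (g : FreeGroup α) :
    prodHom φ ψ (map Sum.inr g) = ψ g := by
  induction g using FreeGroup.induction_on <;> simp_all [prodHom]

theorem conjHom_apply {G H : Type*} [Group G] [Group H] (φ : G →* H) (v : H) (g : G) :
    conjHom φ v g = v⁻¹ * φ g * v := by
  simp [conjHom]

theorem map_inl_ne_map_inr {g : FreeGroup α} (hg : g ≠ 1) :
    map Sum.inl g ≠ map (Sum.inr : α → α ⊕ α) g := by
  intro h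
  have := congrArg (prodHom (MonoidHom.id _) 1) h
  rw [prodHom_map_inl, prodHom_map_inr] at this
  exact hg this

end FreeProduct

/-- If `u ≠ v`, `φᵛ ∗ ψ` has remnant, and for each generator `c` of
`G ∗ G` the remnant `Rem_{φᵛ ∗ ψ}(c)` does not fully cancel in the reduced forms of
`((φᵛ ∗ ψ)(c)) ⬝ v⁻¹u` and `u⁻¹v ⬝ ((φᵛ ∗ ψ)(c))`, then `u` and `v` are in different
doubly-twisted conjugacy classes. -/
theorem classes_distinct_of_remnant_survives {n : ℕ} {β : Type*} [DecidableEq β]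
    (φ ψ : FreeGroup (Fin n) →* FreeGroup β) (u v : FreeGroup β) (huv : u ≠ v)
    (hrem : HasRemnant (prodHom (conjHom φ v) ψ))
    (hR : ∀ c : Fin n ⊕ Fin n,
      remnantSurvivesRightMul (prodHom (conjHom φ v) ψ) c (v⁻¹ * u))
    (hL : ∀ c : Fin n ⊕ Fin n,
      remnantSurvivesLeftMul (prodHom (conjHom φ v) ψ) c (u⁻¹ * v)) :
    ¬ ∃ g : FreeGroup (Fin n), v = φ g * u * (ψ g)⁻¹ := by
  rintro ⟨g, hg⟩
  have hg₁ : g ≠ 1 := by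
    rintro rfl
    simp [eq_comm, huv] at hg
  have himage : u⁻¹ * v * prodHom (conjHom φ v) ψ ((map Sum.inl g)⁻¹ * map Sum.inr g) = 1 := by
    rw [_root_.map_mul, _root_.map_inv, prodHom_map_inl, prodHom_map_inr, conjHom_apply, hg]
    group
  refine mul_map_ne_one_of_remnantSurvives hrem (by simpa using hR) hL ?_ himage
  exact mt inv_mul_eq_one.1 (map_inl_ne_map_inr hg₁)
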